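/- arXiv:0806.4391 — 3 statements merged into one kernel-verified Lean document; each statement's English description precedes it below -/
import Mathlib

section
/- Consider the FPL algorithm with learning rate ε_{t-1} = 1/(μ·max{s¹_{1:t-1}, s²_{1:t-1}}) and the IFPL algorithm with learning rate ε_t = 1/(μ·max{s¹_{1:t}, s²_{1:t}}), both using the same i.i.d. exponential perturbations ξ¹_t, ξ²_t, in a two-expert game with nonnegative gains. Then for every t and every pair of experts, the probabilities of choosing expert i under FPL and IFPL satisfy e^{2/μ}·P{J=i} ≥ P{I=i} ≥ e^{−2/μ}·P{J=i} for i = 1,2, and consequently the expected one-step gains satisfy l_t ≥ e^{−2/μ}·r_t. -/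
open MeasureTheory ProbabilityTheory Filter

/-- Cumulative gain `sⁱ_{1:t}`, including the initial gain `sⁱ_0` (taken to be `1`). -/
noncomputable def cum (s : ℕ → ℝ) (t : ℕ) : ℝ := ∑ j ∈ Finset.range (t + 1), s j

/-- `v_t = max {s¹_{1:t}, s²_{1:t}}`. -/
noncomputable def vmax (s1 s2 : ℕ → ℝ) (t : ℕ) : ℝ := max (cum s1 t) (cum s2 t)

/-- The event that the perturbed leader, with cumulative gains evaluated at time `u` and
learning rate `ε_u = 1/(μ v_u)` (so the perturbation is `ξ/ε_u = μ v_u ξ`), selects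
expert 1 at step `t`. For FPL take `u = t - 1`, for IFPL take `u = t`. -/
def pick1 {Ω : Type*} (ξ : ℕ × Bool → Ω → ℝ) (μ : ℝ) (s1 s2 : ℕ → ℝ) (t u : ℕ) : Set Ω :=
  {ω | cum s1 u + μ * vmax s1 s2 u * ξ (t, true) ω >
       cum s2 u + μ * vmax s1 s2 u * ξ (t, false) ω}

/-- Expected one-step gain `l_t` of the FPL algorithm (learning rate `1/(μ v_{t-1})`). -/
noncomputable def fplGain {Ω : Type*} [MeasurableSpace Ω] (Pr : Measure Ω)
    (ξ : ℕ × Bool → Ω → ℝ) (μ : ℝ) (s1 s2 : ℕ → ℝ) (t : ℕ) : ℝ :=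
  s1 t * (Pr (pick1 ξ μ s1 s2 t (t - 1))).toReal +
  s2 t * (Pr (pick1 ξ μ s1 s2 t (t - 1))ᶜ).toReal

/-- Expected one-step gain `r_t` of the IFPL algorithm (learning rate `1/(μ v_t)`). -/
noncomputable def ifplGain {Ω : Type*} [MeasurableSpace Ω] (Pr : Measure Ω)
    (ξ : ℕ × Bool → Ω → ℝ) (μ : ℝ) (s1 s2 : ℕ → ℝ) (t : ℕ) : ℝ :=
  s1 t * (Pr (pick1 ξ μ s1 s2 t t)).toReal +
  s2 t * (Pr (pick1 ξ μ s1 s2 t t)ᶜ).toReal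

/-!
Put `ξ = ξ(t, true)`, `η = ξ(t, false)` and `c_u = (s²_{1:u} - s¹_{1:u}) / (μ v_u)`. Both algorithms
pick expert 1 exactly when `ξ > c_u + η`, FPL with `u = t - 1` and IFPL with `u = t`. Since
`|b - a| ≤ max a b` for `a, b ≥ 0`, every `c_u` lies in `[-1/μ, 1/μ]`, so the two thresholds differ
by at most `2/μ`. Conditionally on `η` the probability of the event is `P(ξ > c_u + η)`, and the
exponential tail `min 1 e^{-b}` changes by a factor at most `e^{δ}` when `b` moves by `δ`;
integrating over `η` gives the bound. The complementary event `η ≥ ξ - c_u` is treated in the same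
way with the roles of `ξ` and `η` exchanged, using that the exponential law has no atoms.
-/

open Set

/-- The tail `P(ξ > b) = min 1 e^{-b}` of the standard exponential law. -/
noncomputable def expTail (b : ℝ) : ℝ := Real.exp (-max b 0)

lemma continuous_expTail : Continuous expTail := by
  unfold expTail
  fun_prop

lemma exp_neg_mul_expTail_le {b b' δ : ℝ} (hδ : 0 ≤ δ) (h : b' ≤ b + δ) :
    Real.exp (-δ) * expTail b ≤ expTail b' := by
  rw [expTail, expTail, ← Real.exp_add, Real.exp_le_exp]
  have : max b' 0 ≤ max b 0 + δ :=
    max_le (by linarith [le_max_left b 0]) (by linarith [le_max_right b 0])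
  linarith

lemma ENNReal.le_ofReal_exp_mul_of_ofReal_exp_neg_mul_le {a b : ENNReal} {δ : ℝ}
    (h : ENNReal.ofReal (Real.exp (-δ)) * a ≤ b) : a ≤ ENNReal.ofReal (Real.exp δ) * b := by
  calc a = ENNReal.ofReal (Real.exp δ) * (ENNReal.ofReal (Real.exp (-δ)) * a) := by
        rw [← mul_assoc, ← ENNReal.ofReal_mul (Real.exp_pos _).le, ← Real.exp_add, add_neg_cancel,
          Real.exp_zero, ENNReal.ofReal_one, one_mul]
    _ ≤ ENNReal.ofReal (Real.exp δ) * b := mul_le_mul_right h _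

lemma measure_singleton_eq_zero_of_continuous_measureReal_Ioi {ν : Measure ℝ}
    [IsProbabilityMeasure ν] (h : Continuous fun x => ν.real (Ioi x)) (a : ℝ) : ν {a} = 0 := by
  have hcdf : Continuous (cdf ν) := by
    have : (cdf ν : ℝ → ℝ) = fun x => 1 - ν.real (Ioi x) := by
      funext x
      rw [cdf_eq_real, ← compl_Ioi, measureReal_compl measurableSet_Ioi, probReal_univ]
    rw [this]
    exact continuous_const.sub h
  rw [← measure_cdf ν, StieltjesFunction.measure_singleton,
    hcdf.continuousWithinAt.leftLim_eq, sub_self, ENNReal.ofReal_zero]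

section Independence

variable {Ω α β : Type*} [MeasurableSpace Ω] [MeasurableSpace α] [MeasurableSpace β]
  {P : Measure Ω} [IsFiniteMeasure P] {X : Ω → α} {Y : Ω → β}

lemma ProbabilityTheory.IndepFun.measure_mem_eq_lintegral (hX : Measurable X)
    (hY : Measurable Y) (hind : IndepFun X Y P) {S : Set (α × β)} (hS : MeasurableSet S) :
    P {ω | (X ω, Y ω) ∈ S} = ∫⁻ y, P {ω | (X ω, y) ∈ S} ∂(P.map Y) := by
  rw [show {ω | (X ω, Y ω) ∈ S} = (fun ω => (X ω, Y ω)) ⁻¹' S from rfl,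
    ← Measure.map_apply (hX.prodMk hY) hS,
    (indepFun_iff_map_prod_eq_prod_map_map hX.aemeasurable hY.aemeasurable).mp hind,
    Measure.prod_apply_symm hS]
  refine lintegral_congr fun y => ?_
  rw [Measure.map_apply hX (measurable_prodMk_right hS)]
  rfl

lemma ProbabilityTheory.IndepFun.mul_measure_mem_le_of_forall (hX : Measurable X)
    (hY : Measurable Y) (hind : IndepFun X Y P) {S S' : Set (α × β)} (hS : MeasurableSet S)
    (hS' : MeasurableSet S') {r : ENNReal} (hr : r ≠ ⊤)
    (h : ∀ y, r * P {ω | (X ω, y) ∈ S} ≤ P {ω | (X ω, y) ∈ S'}) :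
    r * P {ω | (X ω, Y ω) ∈ S} ≤ P {ω | (X ω, Y ω) ∈ S'} := by
  rw [hind.measure_mem_eq_lintegral hX hY hS, hind.measure_mem_eq_lintegral hX hY hS',
    ← lintegral_const_mul' _ _ hr]
  exact lintegral_mono h

end Independence

section ExponentialTail

variable {Ω : Type*} [MeasurableSpace Ω] {P : Measure Ω} [IsProbabilityMeasure P] {X Y : Ω → ℝ}

lemma measure_lt_eq_expTail
    (h : ∀ y : ℝ, 0 ≤ y → P {ω | X ω > y} = ENNReal.ofReal (Real.exp (-y))) (b : ℝ) :
    P {ω | b < X ω} = ENNReal.ofReal (expTail b) := by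
  rcases le_total 0 b with hb | hb
  · rw [expTail, max_eq_left hb]
    exact h b hb
  · rw [expTail, max_eq_right hb, neg_zero, Real.exp_zero, ENNReal.ofReal_one]
    refine le_antisymm prob_le_one ?_
    calc (1 : ENNReal) = P {ω | X ω > 0} := by
          rw [h 0 le_rfl, neg_zero, Real.exp_zero, ENNReal.ofReal_one]
      _ ≤ P {ω | b < X ω} := measure_mono fun ω (hω : 0 < X ω) => show b < X ω by linarith

lemma measure_le_eq_expTail (hX : Measurable X)
    (h : ∀ y : ℝ, 0 ≤ y → P {ω | X ω > y} = ENNReal.ofReal (Real.exp (-y))) (b : ℝ) :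
    P {ω | b ≤ X ω} = ENNReal.ofReal (expTail b) := by
  have hIoi : ∀ x, P.map X (Ioi x) = ENNReal.ofReal (expTail x) := fun x => by
    rw [Measure.map_apply hX measurableSet_Ioi]
    exact measure_lt_eq_expTail h x
  have : IsProbabilityMeasure (P.map X) := Measure.isProbabilityMeasure_map hX.aemeasurable
  have hatom : P.map X {b} = 0 := by
    refine measure_singleton_eq_zero_of_continuous_measureReal_Ioi ?_ b
    convert continuous_expTail using 1
    funext x
    rw [measureReal_def, hIoi]
    exact ENNReal.toReal_ofReal (Real.exp_pos _).le
  rw [← hIoi b, measure_congr (Ioi_ae_eq_Ici' hatom), Measure.map_apply hX measurableSet_Ici]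
  rfl

lemma ProbabilityTheory.IndepFun.exp_neg_mul_measure_add_lt_le (hX : Measurable X)
    (hY : Measurable Y) (hind : IndepFun X Y P)
    (htail : ∀ b, P {ω | b < X ω} = ENNReal.ofReal (expTail b)) {c c' δ : ℝ} (hδ : 0 ≤ δ)
    (hc : c' ≤ c + δ) :
    ENNReal.ofReal (Real.exp (-δ)) * P {ω | c + Y ω < X ω} ≤ P {ω | c' + Y ω < X ω} :=
  hind.mul_measure_mem_le_of_forall (S := {p | c + p.2 < p.1}) (S' := {p | c' + p.2 < p.1})
    hX hY (measurableSet_lt (by fun_prop) (by fun_prop))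
    (measurableSet_lt (by fun_prop) (by fun_prop)) ENNReal.ofReal_ne_top fun y => by
      simp only [mem_ofPred_eq]
      rw [htail, htail, ← ENNReal.ofReal_mul (Real.exp_pos _).le]
      exact ENNReal.ofReal_le_ofReal (exp_neg_mul_expTail_le hδ (by linarith))

lemma ProbabilityTheory.IndepFun.exp_neg_mul_measure_add_le_le (hX : Measurable X)
    (hY : Measurable Y) (hind : IndepFun X Y P)
    (htail : ∀ b, P {ω | b ≤ X ω} = ENNReal.ofReal (expTail b)) {c c' δ : ℝ} (hδ : 0 ≤ δ)
    (hc : c' ≤ c + δ) :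
    ENNReal.ofReal (Real.exp (-δ)) * P {ω | c + Y ω ≤ X ω} ≤ P {ω | c' + Y ω ≤ X ω} :=
  hind.mul_measure_mem_le_of_forall (S := {p | c + p.2 ≤ p.1}) (S' := {p | c' + p.2 ≤ p.1})
    hX hY (measurableSet_le (by fun_prop) (by fun_prop))
    (measurableSet_le (by fun_prop) (by fun_prop)) ENNReal.ofReal_ne_top fun y => by
      simp only [mem_ofPred_eq]
      rw [htail, htail, ← ENNReal.ofReal_mul (Real.exp_pos _).le]
      exact ENNReal.ofReal_le_ofReal (exp_neg_mul_expTail_le hδ (by linarith))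

end ExponentialTail

lemma abs_sub_div_max_le_one {a b : ℝ} (ha : 0 ≤ a) (hb : 0 ≤ b) : |(b - a) / max a b| ≤ 1 := by
  rw [abs_div, abs_of_nonneg (le_max_of_le_left ha)]
  refine div_le_one_of_le₀ ?_ (le_max_of_le_left ha)
  rw [← max_sub_min_eq_abs]
  linarith [le_min ha hb]

lemma sub_div_add_lt_iff_add_mul_lt {a b p x y : ℝ} (hp : 0 < p) :
    (b - a) / p + y < x ↔ b + p * y < a + p * x := by
  rw [← lt_sub_iff_add_lt, div_lt_iff₀ hp]
  constructor <;> intro h <;> linarith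

lemma one_le_cum {s : ℕ → ℝ} (h0 : s 0 = 1) (hs : ∀ t, 1 ≤ t → 0 ≤ s t) (u : ℕ) :
    1 ≤ cum s u := by
  rw [cum, Finset.sum_range_succ', h0, le_add_iff_nonneg_left]
  exact Finset.sum_nonneg fun j _ => hs (j + 1) (Nat.le_add_left 1 j)

/-- The threshold `c_u = (s²_{1:u} - s¹_{1:u}) / (μ v_u)` that `ξ(t, true) - ξ(t, false)` has to
exceed for expert 1 to be picked. -/
noncomputable def scaledLead (μ : ℝ) (s1 s2 : ℕ → ℝ) (u : ℕ) : ℝ :=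
  (cum s2 u - cum s1 u) / (μ * vmax s1 s2 u)

lemma abs_scaledLead_le {μ : ℝ} (hμ : 0 < μ) {s1 s2 : ℕ → ℝ} {u : ℕ} (h1 : 0 ≤ cum s1 u)
    (h2 : 0 ≤ cum s2 u) : |scaledLead μ s1 s2 u| ≤ 1 / μ := by
  rw [scaledLead, mul_comm, ← div_div, abs_div, abs_of_pos hμ]
  gcongr
  exact abs_sub_div_max_le_one h1 h2

section Pick

variable {Ω : Type*} (ξ : ℕ × Bool → Ω → ℝ) {μ : ℝ} {s1 s2 : ℕ → ℝ} {t u : ℕ}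

lemma pick1_eq (hv : 0 < μ * vmax s1 s2 u) :
    pick1 ξ μ s1 s2 t u = {ω | scaledLead μ s1 s2 u + ξ (t, false) ω < ξ (t, true) ω} := by
  ext ω
  exact (sub_div_add_lt_iff_add_mul_lt hv).symm

lemma compl_pick1_eq (hv : 0 < μ * vmax s1 s2 u) :
    (pick1 ξ μ s1 s2 t u)ᶜ = {ω | -scaledLead μ s1 s2 u + ξ (t, true) ω ≤ ξ (t, false) ω} := by
  ext ω
  simp only [pick1_eq ξ hv, mem_compl_iff, mem_ofPred_eq, not_lt, neg_add_le_iff_le_add]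

end Pick

lemma exp_neg_mul_ifplGain_le_fplGain {Ω : Type*} [MeasurableSpace Ω] {Pr : Measure Ω}
    [IsFiniteMeasure Pr] {ξ : ℕ × Bool → Ω → ℝ} {μ δ : ℝ} {s1 s2 : ℕ → ℝ} {t : ℕ}
    (hs1 : 0 ≤ s1 t) (hs2 : 0 ≤ s2 t)
    (hP : ENNReal.ofReal (Real.exp (-δ)) * Pr (pick1 ξ μ s1 s2 t t) ≤
      Pr (pick1 ξ μ s1 s2 t (t - 1)))
    (hQ : ENNReal.ofReal (Real.exp (-δ)) * Pr (pick1 ξ μ s1 s2 t t)ᶜ ≤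
      Pr (pick1 ξ μ s1 s2 t (t - 1))ᶜ) :
    Real.exp (-δ) * ifplGain Pr ξ μ s1 s2 t ≤ fplGain Pr ξ μ s1 s2 t := by
  have toReal_le {a b : ENNReal} (hb : b ≠ ⊤) (h : ENNReal.ofReal (Real.exp (-δ)) * a ≤ b) :
      Real.exp (-δ) * a.toReal ≤ b.toReal := by
    simpa [ENNReal.toReal_mul, ENNReal.toReal_ofReal (Real.exp_pos _).le] using
      ENNReal.toReal_mono hb h
  have h1 := mul_le_mul_of_nonneg_left (toReal_le (measure_ne_top _ _) hP) hs1
  have h2 := mul_le_mul_of_nonneg_left (toReal_le (measure_ne_top _ _) hQ) hs2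
  rw [fplGain, ifplGain]
  linear_combination h1 + h2

theorem fpl_ifpl_step_comparison_general
    {Ω : Type*} [MeasurableSpace Ω] (Pr : Measure Ω) [IsProbabilityMeasure Pr]
    (ξ : ℕ × Bool → Ω → ℝ) (hmeas : ∀ p, Measurable (ξ p))
    (hindep : iIndepFun ξ Pr)
    (htail : ∀ p, ∀ y : ℝ, 0 ≤ y → Pr {ω | ξ p ω > y} = ENNReal.ofReal (Real.exp (-y)))
    (μ : ℝ) (hμ0 : 0 < μ)
    (s1 s2 : ℕ → ℝ) (h01 : s1 0 = 1) (h02 : s2 0 = 1)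
    (hpos : ∀ t, 1 ≤ t → 0 ≤ s1 t ∧ 0 ≤ s2 t)
    : ∀ t : ℕ, 1 ≤ t →
      (ENNReal.ofReal (Real.exp (2 / μ)) * Pr (pick1 ξ μ s1 s2 t t) ≥
          Pr (pick1 ξ μ s1 s2 t (t - 1)) ∧
        Pr (pick1 ξ μ s1 s2 t (t - 1)) ≥
          ENNReal.ofReal (Real.exp (-(2 / μ))) * Pr (pick1 ξ μ s1 s2 t t)) ∧
      (ENNReal.ofReal (Real.exp (2 / μ)) * Pr (pick1 ξ μ s1 s2 t t)ᶜ ≥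
          Pr (pick1 ξ μ s1 s2 t (t - 1))ᶜ ∧
        Pr (pick1 ξ μ s1 s2 t (t - 1))ᶜ ≥
          ENNReal.ofReal (Real.exp (-(2 / μ))) * Pr (pick1 ξ μ s1 s2 t t)ᶜ) ∧
      fplGain Pr ξ μ s1 s2 t ≥ Real.exp (-(2 / μ)) * ifplGain Pr ξ μ s1 s2 t := by
  intro t ht
  have hind : IndepFun (ξ (t, true)) (ξ (t, false)) Pr := hindep.indepFun (by simp)
  have hind' : IndepFun (ξ (t, false)) (ξ (t, true)) Pr := hindep.indepFun (by simp)
  have hcum1 := one_le_cum h01 fun j hj => (hpos j hj).1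
  have hcum2 := one_le_cum h02 fun j hj => (hpos j hj).2
  have hv (u : ℕ) : 0 < μ * vmax s1 s2 u :=
    mul_pos hμ0 (zero_lt_one.trans_le ((hcum1 u).trans (le_max_left _ _)))
  have hc (u : ℕ) : |scaledLead μ s1 s2 u| ≤ 1 / μ :=
    abs_scaledLead_le hμ0 (zero_le_one.trans (hcum1 u)) (zero_le_one.trans (hcum2 u))
  have hlead (u u' : ℕ) : scaledLead μ s1 s2 u' ≤ scaledLead μ s1 s2 u + 2 / μ := by
    linarith [abs_le.mp (hc u), abs_le.mp (hc u'), show 2 / μ = 1 / μ + 1 / μ by ring]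
  have hP (u u' : ℕ) : ENNReal.ofReal (Real.exp (-(2 / μ))) * Pr (pick1 ξ μ s1 s2 t u) ≤
      Pr (pick1 ξ μ s1 s2 t u') := by
    rw [pick1_eq ξ (hv u), pick1_eq ξ (hv u')]
    exact hind.exp_neg_mul_measure_add_lt_le (hmeas _) (hmeas _)
      (measure_lt_eq_expTail (htail _)) (by positivity) (hlead u u')
  have hQ (u u' : ℕ) : ENNReal.ofReal (Real.exp (-(2 / μ))) * Pr (pick1 ξ μ s1 s2 t u)ᶜ ≤
      Pr (pick1 ξ μ s1 s2 t u')ᶜ := by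
    rw [compl_pick1_eq ξ (hv u), compl_pick1_eq ξ (hv u')]
    exact hind'.exp_neg_mul_measure_add_le_le (hmeas _) (hmeas _)
      (measure_le_eq_expTail (hmeas _) (htail _)) (by positivity) (by linarith [hlead u' u])
  refine ⟨⟨ENNReal.le_ofReal_exp_mul_of_ofReal_exp_neg_mul_le (hP _ _), hP _ _⟩,
    ⟨ENNReal.le_ofReal_exp_mul_of_ofReal_exp_neg_mul_le (hQ _ _), hQ _ _⟩,
    exp_neg_mul_ifplGain_le_fplGain (hpos t ht).1 (hpos t ht).2 (hP _ _) (hQ _ _)⟩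

/-- Per-step comparison of FPL and IFPL: the choice probabilities of the two algorithms
differ by a factor of at most `e^{2/μ}`, hence `l_t ≥ e^{−2/μ} r_t`. -/
theorem fpl_ifpl_step_comparison
    {Ω : Type*} [MeasurableSpace Ω] (Pr : Measure Ω) [IsProbabilityMeasure Pr]
    (ξ : ℕ × Bool → Ω → ℝ) (hmeas : ∀ p, Measurable (ξ p))
    (hindep : iIndepFun ξ Pr)
    (htail : ∀ p, ∀ y : ℝ, 0 ≤ y → Pr {ω | ξ p ω > y} = ENNReal.ofReal (Real.exp (-y)))
    (μ : ℝ) (hμ0 : 0 < μ) (hμ1 : μ < 1)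
    (s1 s2 : ℕ → ℝ) (h01 : s1 0 = 1) (h02 : s2 0 = 1)
    (hpos : ∀ t, 1 ≤ t → 0 ≤ s1 t ∧ 0 ≤ s2 t)
    (hone : ∀ t, 1 ≤ t → s1 t = 0 ∨ s2 t = 0)
    : ∀ t : ℕ, 1 ≤ t →
      (ENNReal.ofReal (Real.exp (2 / μ)) * Pr (pick1 ξ μ s1 s2 t t) ≥
          Pr (pick1 ξ μ s1 s2 t (t - 1)) ∧
        Pr (pick1 ξ μ s1 s2 t (t - 1)) ≥
          ENNReal.ofReal (Real.exp (-(2 / μ))) * Pr (pick1 ξ μ s1 s2 t t)) ∧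
      (ENNReal.ofReal (Real.exp (2 / μ)) * Pr (pick1 ξ μ s1 s2 t t)ᶜ ≥
          Pr (pick1 ξ μ s1 s2 t (t - 1))ᶜ ∧
        Pr (pick1 ξ μ s1 s2 t (t - 1))ᶜ ≥
          ENNReal.ofReal (Real.exp (-(2 / μ))) * Pr (pick1 ξ μ s1 s2 t t)ᶜ) ∧
      fplGain Pr ξ μ s1 s2 t ≥ Real.exp (-(2 / μ)) * ifplGain Pr ξ μ s1 s2 t :=
  fpl_ifpl_step_comparison_general Pr ξ hmeas hindep htail μ hμ0 s1 s2 h01 h02 hpos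
end

section
/- For any 0 < μ < 1, the FPL algorithm applied to the shifted experts of a non-degenerate zero-sum two-expert game has expected cumulative gain l_{1:T} ≥ e^{−2/μ}(1−μ)·|s¹_{1:T}| − V_T·(1 − e^{−2/μ}(1−μ)) for all T, where V_T = ∑_{t=1}^T |s¹_t| is the volume of the game. -/
open MeasureTheory ProbabilityTheory Filter

/-- First shifted expert of the zero-sum game: `s̃¹_t = s¹_t + |s¹_t|` (and `s̃¹_0 = 1`). -/
noncomputable def sh1 (s1 : ℕ → ℝ) : ℕ → ℝ := fun t => if t = 0 then 1 else s1 t + |s1 t|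

/-- Second shifted expert of the zero-sum game: `s̃²_t = −s¹_t + |s¹_t|` (and `s̃²_0 = 1`). -/
noncomputable def sh2 (s1 : ℕ → ℝ) : ℕ → ℝ := fun t => if t = 0 then 1 else -s1 t + |s1 t|

/-- The volume `V_t = ∑_{j≤t} |s¹_j|` of the zero-sum game. -/
noncomputable def vol (s1 : ℕ → ℝ) (t : ℕ) : ℝ := ∑ j ∈ Finset.Icc 1 t, |s1 j|

/-- Expected one-step gain of the FPL algorithm applied to the shifted experts of the
zero-sum game (the algorithm receives the original gains `s¹_t` resp. `s²_t = −s¹_t`). -/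
noncomputable def zsFplGain {Ω : Type*} [MeasurableSpace Ω] (Pr : Measure Ω)
    (ξ : ℕ × Bool → Ω → ℝ) (μ : ℝ) (s1 : ℕ → ℝ) (t : ℕ) : ℝ :=
  s1 t * (Pr (pick1 ξ μ (sh1 s1) (sh2 s1) t (t - 1))).toReal +
  (-s1 t) * (Pr (pick1 ξ μ (sh1 s1) (sh2 s1) t (t - 1))ᶜ).toReal

/-!
When both cumulative gains are nonnegative, the perturbation `μ v_{t-1} ξ` dominates the gap
between them, so FPL follows each expert with probability at least `c = e^{−2/μ}(1−μ)`:
expert 1 is chosen as soon as `ξ¹ > 2/μ` and `ξ² ≤ 1/μ`, an event of probability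
`e^{−2/μ}(1 − e^{−1/μ}) ≥ c`. The shifted experts have cumulative gains `≥ 1`, so in the
zero-sum game every step gains at least `−(1 − 2c)|s¹_t|`. Summing, `l_{1:T} ≥ −(1 − 2c) V_T`,
which dominates the claimed bound because `|s¹_{1:T}| ≤ V_T`.
-/

lemma exp_neg_inv_le_self {μ : ℝ} (hμ : 0 < μ) : Real.exp (-μ⁻¹) ≤ μ := by
  rw [Real.exp_neg, inv_le_comm₀ (Real.exp_pos _) hμ]
  linarith [Real.add_one_le_exp μ⁻¹]

section ExponentialPerturbation

variable {Ω : Type*} [MeasurableSpace Ω] {Pr : Measure Ω} [IsProbabilityMeasure Pr]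
  {X Y : Ω → ℝ}

lemma exp_mul_one_sub_exp_le_probReal_add_lt (hY : Measurable Y) (hXY : IndepFun X Y Pr)
    (hXt : ∀ y : ℝ, 0 ≤ y → Pr {ω | X ω > y} = ENNReal.ofReal (Real.exp (-y)))
    (hYt : ∀ y : ℝ, 0 ≤ y → Pr {ω | Y ω > y} = ENNReal.ofReal (Real.exp (-y)))
    {a l : ℝ} (ha : 0 ≤ a) (hl : 0 ≤ l) :
    Real.exp (-(a + l)) * (1 - Real.exp (-l)) ≤ Pr.real {ω | Y ω + a < X ω} := by
  have hsub : X ⁻¹' Set.Ioi (a + l) ∩ Y ⁻¹' Set.Iic l ⊆ {ω | Y ω + a < X ω} := by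
    rintro ω ⟨hx, hy⟩
    simp only [Set.mem_preimage, Set.mem_Ioi, Set.mem_Iic] at hx hy
    show Y ω + a < X ω
    linarith
  have hX : Pr.real (X ⁻¹' Set.Ioi (a + l)) = Real.exp (-(a + l)) := by
    change (Pr {ω | X ω > a + l}).toReal = _
    rw [hXt _ (by linarith), ENNReal.toReal_ofReal (Real.exp_nonneg _)]
  have hY : Pr.real (Y ⁻¹' Set.Iic l) = 1 - Real.exp (-l) := by
    have hcompl : Y ⁻¹' Set.Iic l = {ω | Y ω > l}ᶜ := by
      ext ω; simp [not_lt]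
    rw [hcompl, probReal_compl_eq_one_sub (measurableSet_lt measurable_const hY),
      measureReal_def, hYt l hl, ENNReal.toReal_ofReal (Real.exp_nonneg _)]
  calc Real.exp (-(a + l)) * (1 - Real.exp (-l))
      = Pr.real (X ⁻¹' Set.Ioi (a + l) ∩ Y ⁻¹' Set.Iic l) := by
        rw [← hX, ← hY, measureReal_def, measureReal_def, measureReal_def, ← ENNReal.toReal_mul,
          hXY.measure_inter_preimage_eq_mul _ _ measurableSet_Ioi measurableSet_Iic]
    _ ≤ Pr.real {ω | Y ω + a < X ω} := measureReal_mono hsub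

lemma exp_mul_one_sub_le_probReal_perturbed_gt (hY : Measurable Y) (hXY : IndepFun X Y Pr)
    (hXt : ∀ y : ℝ, 0 ≤ y → Pr {ω | X ω > y} = ENNReal.ofReal (Real.exp (-y)))
    (hYt : ∀ y : ℝ, 0 ≤ y → Pr {ω | Y ω > y} = ENNReal.ofReal (Real.exp (-y)))
    {μ b₁ b₂ : ℝ} (hμ : 0 < μ) (hb₁ : 0 ≤ b₁) (hb : 0 < max b₁ b₂) :
    Real.exp (-(2 / μ)) * (1 - μ) ≤
      Pr.real {ω | b₁ + μ * max b₁ b₂ * X ω > b₂ + μ * max b₁ b₂ * Y ω} := by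
  have hsub : {ω | Y ω + μ⁻¹ < X ω} ⊆
      {ω | b₁ + μ * max b₁ b₂ * X ω > b₂ + μ * max b₁ b₂ * Y ω} := by
    intro ω (hω : Y ω + μ⁻¹ < X ω)
    have hgap : μ * max b₁ b₂ * μ⁻¹ = max b₁ b₂ := by field_simp
    have hκ := mul_lt_mul_of_pos_left hω (mul_pos hμ hb)
    show b₂ + μ * max b₁ b₂ * Y ω < b₁ + μ * max b₁ b₂ * X ω
    linarith [le_max_right b₁ b₂]
  calc Real.exp (-(2 / μ)) * (1 - μ)
      ≤ Real.exp (-(μ⁻¹ + μ⁻¹)) * (1 - Real.exp (-μ⁻¹)) := by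
        rw [← two_mul, ← div_eq_mul_inv]
        gcongr
        exact exp_neg_inv_le_self hμ
    _ ≤ Pr.real {ω | Y ω + μ⁻¹ < X ω} :=
        exp_mul_one_sub_exp_le_probReal_add_lt hY hXY hXt hYt (inv_nonneg.2 hμ.le)
          (inv_nonneg.2 hμ.le)
    _ ≤ _ := measureReal_mono hsub

end ExponentialPerturbation

lemma le_cum_of_nonneg {s : ℕ → ℝ} (hs : ∀ j, 0 ≤ s j) (t : ℕ) : s 0 ≤ cum s t :=
  Finset.single_le_sum (fun j _ => hs j) (Finset.mem_range.2 t.succ_pos)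

lemma sh1_nonneg (s1 : ℕ → ℝ) (t : ℕ) : 0 ≤ sh1 s1 t := by
  unfold sh1; split_ifs
  · exact zero_le_one
  · linarith [neg_abs_le (s1 t)]

lemma sh2_nonneg (s1 : ℕ → ℝ) (t : ℕ) : 0 ≤ sh2 s1 t := by
  unfold sh2; split_ifs
  · exact zero_le_one
  · linarith [le_abs_self (s1 t)]

lemma mul_add_neg_mul_ge {c p q s : ℝ} (hp : c ≤ p) (hq : c ≤ q) (hpq : p + q = 1) :
    (2 * c - 1) * |s| ≤ s * p + -s * q := by
  rcases abs_cases s with ⟨hs, _⟩ | ⟨hs, _⟩ <;> rw [hs] <;> nlinarith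

section FollowThePerturbedLeader

variable {Ω : Type*} [MeasurableSpace Ω] {Pr : Measure Ω} [IsProbabilityMeasure Pr]
  {ξ : ℕ × Bool → Ω → ℝ} {μ : ℝ} {s₁ s₂ : ℕ → ℝ}

lemma measurableSet_pick1 (hmeas : ∀ p, Measurable (ξ p)) (t u : ℕ) :
    MeasurableSet (pick1 ξ μ s₁ s₂ t u) :=
  measurableSet_lt (by fun_prop) (by fun_prop)

lemma le_probReal_pick1 (hmeas : ∀ p, Measurable (ξ p)) (hindep : iIndepFun ξ Pr)
    (htail : ∀ p, ∀ y : ℝ, 0 ≤ y → Pr {ω | ξ p ω > y} = ENNReal.ofReal (Real.exp (-y)))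
    (hμ : 0 < μ) {t u : ℕ} (h₁ : 0 ≤ cum s₁ u) (hv : 0 < vmax s₁ s₂ u) :
    Real.exp (-(2 / μ)) * (1 - μ) ≤ Pr.real (pick1 ξ μ s₁ s₂ t u) :=
  exp_mul_one_sub_le_probReal_perturbed_gt (hmeas _) (hindep.indepFun (by simp)) (htail _)
    (htail _) hμ h₁ hv

lemma le_probReal_compl_pick1 (hmeas : ∀ p, Measurable (ξ p)) (hindep : iIndepFun ξ Pr)
    (htail : ∀ p, ∀ y : ℝ, 0 ≤ y → Pr {ω | ξ p ω > y} = ENNReal.ofReal (Real.exp (-y)))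
    (hμ : 0 < μ) {t u : ℕ} (h₂ : 0 ≤ cum s₂ u) (hv : 0 < vmax s₁ s₂ u) :
    Real.exp (-(2 / μ)) * (1 - μ) ≤ Pr.real (pick1 ξ μ s₁ s₂ t u)ᶜ := by
  rw [vmax, max_comm] at hv
  refine (exp_mul_one_sub_le_probReal_perturbed_gt (hmeas _) (hindep.indepFun (by simp))
    (htail (t, false)) (htail (t, true)) hμ h₂ hv).trans (measureReal_mono ?_)
  intro ω hω
  simp only [Set.mem_ofPred_eq] at hω
  simp only [pick1, vmax, max_comm (cum s₁ u), Set.mem_compl_iff, Set.mem_ofPred_eq, not_lt]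
  exact hω.le

lemma zsFplGain_ge (hmeas : ∀ p, Measurable (ξ p)) (hindep : iIndepFun ξ Pr)
    (htail : ∀ p, ∀ y : ℝ, 0 ≤ y → Pr {ω | ξ p ω > y} = ENNReal.ofReal (Real.exp (-y)))
    (hμ : 0 < μ) (s1 : ℕ → ℝ) (t : ℕ) :
    (2 * (Real.exp (-(2 / μ)) * (1 - μ)) - 1) * |s1 t| ≤ zsFplGain Pr ξ μ s1 t := by
  have h₁ : 0 < cum (sh1 s1) (t - 1) := zero_lt_one.trans_le (le_cum_of_nonneg (sh1_nonneg s1) _)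
  have h₂ : 0 < cum (sh2 s1) (t - 1) := zero_lt_one.trans_le (le_cum_of_nonneg (sh2_nonneg s1) _)
  have hv : 0 < vmax (sh1 s1) (sh2 s1) (t - 1) := lt_max_of_lt_left h₁
  exact mul_add_neg_mul_ge (le_probReal_pick1 hmeas hindep htail hμ h₁.le hv)
    (le_probReal_compl_pick1 hmeas hindep htail hμ h₂.le hv)
    (probReal_add_probReal_compl (measurableSet_pick1 hmeas _ _))

end FollowThePerturbedLeader

theorem zero_sum_fpl_bound_general
    {Ω : Type*} [MeasurableSpace Ω] (Pr : Measure Ω) [IsProbabilityMeasure Pr]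
    (ξ : ℕ × Bool → Ω → ℝ) (hmeas : ∀ p, Measurable (ξ p))
    (hindep : iIndepFun ξ Pr)
    (htail : ∀ p, ∀ y : ℝ, 0 ≤ y → Pr {ω | ξ p ω > y} = ENNReal.ofReal (Real.exp (-y)))
    (μ : ℝ) (hμ0 : 0 < μ) (hμ1 : μ < 1)
    (s1 : ℕ → ℝ)
    : ∀ T : ℕ, 1 ≤ T →
      ∑ t ∈ Finset.Icc 1 T, zsFplGain Pr ξ μ s1 t ≥
        Real.exp (-(2 / μ)) * (1 - μ) * |∑ j ∈ Finset.Icc 1 T, s1 j| -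
          vol s1 T * (1 - Real.exp (-(2 / μ)) * (1 - μ)) := by
  intro T _
  set c := Real.exp (-(2 / μ)) * (1 - μ)
  have hc : 0 ≤ c := mul_nonneg (Real.exp_nonneg _) (by linarith)
  have hgain : (2 * c - 1) * vol s1 T ≤ ∑ t ∈ Finset.Icc 1 T, zsFplGain Pr ξ μ s1 t := by
    rw [vol, Finset.mul_sum]
    exact Finset.sum_le_sum fun t _ => zsFplGain_ge hmeas hindep htail hμ0 s1 t
  have hvol : |∑ j ∈ Finset.Icc 1 T, s1 j| ≤ vol s1 T := Finset.abs_sum_le_sum_abs _ _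
  linarith [mul_le_mul_of_nonneg_left hvol hc]

/-- In a non-degenerate zero-sum game the FPL algorithm applied to the shifted experts has
expected cumulative gain
`l_{1:T} ≥ e^{−2/μ}(1−μ)·|s¹_{1:T}| − V_T·(1 − e^{−2/μ}(1−μ))` for all `T`. -/
theorem zero_sum_fpl_bound
    {Ω : Type*} [MeasurableSpace Ω] (Pr : Measure Ω) [IsProbabilityMeasure Pr]
    (ξ : ℕ × Bool → Ω → ℝ) (hmeas : ∀ p, Measurable (ξ p))
    (hindep : iIndepFun ξ Pr)
    (htail : ∀ p, ∀ y : ℝ, 0 ≤ y → Pr {ω | ξ p ω > y} = ENNReal.ofReal (Real.exp (-y)))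
    (μ : ℝ) (hμ0 : 0 < μ) (hμ1 : μ < 1)
    (s1 : ℕ → ℝ)
    (hnondeg : Tendsto (vol s1) atTop atTop)
    : ∀ T : ℕ, 1 ≤ T →
      ∑ t ∈ Finset.Icc 1 T, zsFplGain Pr ξ μ s1 t ≥
        Real.exp (-(2 / μ)) * (1 - μ) * |∑ j ∈ Finset.Icc 1 T, s1 j| -
          vol s1 T * (1 - Real.exp (-(2 / μ)) * (1 - μ)) :=
  zero_sum_fpl_bound_general Pr ξ hmeas hindep htail μ hμ0 hμ1 s1
end

section
/- Let ξ¹, ξ² be independent rate-1 exponential random variables, let a₁, a₂, b₁, b₂ be reals and ε, ε' > 0. Suppose b₁ − b₂ = a₁ − a₂ + c for some real c, and let I = 1 iff a₁ + ξ¹/ε > a₂ + ξ²/ε and J = 1 iff b₁ + ξ¹/ε' > b₂ + ξ²/ε'. If |ε(a₂ − a₁) − ε'(b₂ − b₁)| ≤ K, then e^{K}·P{J=1} ≥ P{I=1} ≥ e^{−K}·P{J=1}. -/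
open MeasureTheory

private lemma tail_full {Ω : Type*} [MeasurableSpace Ω]
    (Pr : Measure Ω) [IsProbabilityMeasure Pr] (ξ : Ω → ℝ)
    (ht : ∀ y : ℝ, 0 ≤ y → Pr {ω | ξ ω > y} = ENNReal.ofReal (Real.exp (-y))) :
    ∀ t : ℝ, Pr {ω | ξ ω > t} = ENNReal.ofReal (Real.exp (-(max t 0))) := by
  intro t
  rcases le_or_gt 0 t with h | h
  · rw [max_eq_left h]; exact ht t h
  · rw [max_eq_right h.le]
    simp only [neg_zero, Real.exp_zero, ENNReal.ofReal_one]
    refine le_antisymm prob_le_one ?_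
    have h0 := ht 0 le_rfl
    simp only [neg_zero, Real.exp_zero, ENNReal.ofReal_one] at h0
    calc (1 : ENNReal) = Pr {ω | ξ ω > 0} := h0.symm
      _ ≤ Pr {ω | ξ ω > t} := measure_mono (fun ω hω => lt_trans h hω)

private lemma prob_eq_lintegral {Ω : Type*} [MeasurableSpace Ω]
    (Pr : Measure Ω) [IsProbabilityMeasure Pr] (ξ1 ξ2 : Ω → ℝ)
    (hm1 : Measurable ξ1) (hm2 : Measurable ξ2)
    (hind : ProbabilityTheory.IndepFun ξ1 ξ2 Pr)
    (ht1 : ∀ y : ℝ, 0 ≤ y → Pr {ω | ξ1 ω > y} = ENNReal.ofReal (Real.exp (-y)))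
    (c : ℝ) :
    Pr {ω | ξ1 ω > c + ξ2 ω} =
      ∫⁻ y, ENNReal.ofReal (Real.exp (-(max (c + y) 0))) ∂(Pr.map ξ2) := by
  have hmap := (ProbabilityTheory.indepFun_iff_map_prod_eq_prod_map_map
    hm1.aemeasurable hm2.aemeasurable).mp hind
  have hS : MeasurableSet {p : ℝ × ℝ | p.1 > c + p.2} :=
    measurableSet_lt (measurable_const.add measurable_snd) measurable_fst
  have h1 : {ω | ξ1 ω > c + ξ2 ω} = (fun ω => (ξ1 ω, ξ2 ω)) ⁻¹' {p : ℝ × ℝ | p.1 > c + p.2} := rfl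
  haveI : IsProbabilityMeasure (Pr.map ξ1) := Measure.isProbabilityMeasure_map hm1.aemeasurable
  haveI : IsProbabilityMeasure (Pr.map ξ2) := Measure.isProbabilityMeasure_map hm2.aemeasurable
  rw [h1, ← Measure.map_apply (hm1.prodMk hm2) hS, hmap, Measure.prod_apply_symm hS]
  refine lintegral_congr fun y => ?_
  have : (fun x => (x, y)) ⁻¹' {p : ℝ × ℝ | p.1 > c + p.2} = {x : ℝ | x > c + y} := rfl
  rw [this]
  have : (Pr.map ξ1) {x : ℝ | x > c + y} = Pr {ω | ξ1 ω > c + y} := by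
    show (Pr.map ξ1) (Set.Ioi (c + y)) = _
    rw [Measure.map_apply hm1 measurableSet_Ioi]; rfl
  rw [this, tail_full Pr ξ1 ht1 (c + y)]

private lemma lintegral_tail_le {μ : Measure ℝ} [IsProbabilityMeasure μ] {α β K : ℝ}
    (hK0 : 0 ≤ K) (h : β - α ≤ K) :
    (∫⁻ y, ENNReal.ofReal (Real.exp (-(max (α + y) 0))) ∂μ) ≤
      ENNReal.ofReal (Real.exp K) * ∫⁻ y, ENNReal.ofReal (Real.exp (-(max (β + y) 0))) ∂μ := by
  have hmeas : Measurable fun y : ℝ => ENNReal.ofReal (Real.exp (-(max (β + y) 0))) := by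
    apply ENNReal.measurable_ofReal.comp
    exact (Real.continuous_exp.comp (((continuous_const.add continuous_id).max
      continuous_const).neg)).measurable
  rw [← lintegral_const_mul _ hmeas]
  refine lintegral_mono fun y => ?_
  rw [← ENNReal.ofReal_mul (Real.exp_pos K).le, ← Real.exp_add]
  refine ENNReal.ofReal_le_ofReal (Real.exp_le_exp.mpr ?_)
  rcases le_or_gt (β - α) 0 with hba | hba
  · have hle : max (β + y) 0 ≤ max (α + y) 0 := max_le_max (by linarith) le_rfl
    linarith
  · have h2 : |max (β + y) 0 - max (α + y) 0| ≤ |(β + y) - (α + y)| :=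
      abs_max_sub_max_le_abs _ _ _
    have h3 : |(β + y) - (α + y)| = |β - α| := by ring_nf
    have h4 : |β - α| = β - α := abs_of_pos hba
    rw [h3, h4] at h2
    have := (abs_le.mp h2).2
    linarith

/-- Abstract form of the FPL vs. IFPL comparison: for independent rate-1 exponential
perturbations `ξ¹, ξ²` and two perturbed-leader selection events with parameters
`(a₁, a₂, ε)` and `(b₁, b₂, ε')`, if `|ε(a₂−a₁) − ε'(b₂−b₁)| ≤ K` then
`e^K·P{J=1} ≥ P{I=1} ≥ e^{−K}·P{J=1}`. -/
theorem fpl_ifpl_probability_comparison {Ω : Type*} [MeasurableSpace Ω]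
    (Pr : Measure Ω) [IsProbabilityMeasure Pr] (ξ1 ξ2 : Ω → ℝ)
    (hm1 : Measurable ξ1) (hm2 : Measurable ξ2)
    (hind : ProbabilityTheory.IndepFun ξ1 ξ2 Pr)
    (ht1 : ∀ y : ℝ, 0 ≤ y → Pr {ω | ξ1 ω > y} = ENNReal.ofReal (Real.exp (-y)))
    (ht2 : ∀ y : ℝ, 0 ≤ y → Pr {ω | ξ2 ω > y} = ENNReal.ofReal (Real.exp (-y)))
    (a1 a2 b1 b2 ε ε' K : ℝ) (hε : 0 < ε) (hε' : 0 < ε')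
    (hc : ∃ c : ℝ, b1 - b2 = a1 - a2 + c)
    (hK : |ε * (a2 - a1) - ε' * (b2 - b1)| ≤ K) :
    ENNReal.ofReal (Real.exp K) * Pr {ω | b1 + ξ1 ω / ε' > b2 + ξ2 ω / ε'} ≥
      Pr {ω | a1 + ξ1 ω / ε > a2 + ξ2 ω / ε} ∧
    Pr {ω | a1 + ξ1 ω / ε > a2 + ξ2 ω / ε} ≥
      ENNReal.ofReal (Real.exp (-K)) * Pr {ω | b1 + ξ1 ω / ε' > b2 + ξ2 ω / ε'} := by
  set α := ε * (a2 - a1) with hα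
  set β := ε' * (b2 - b1) with hβ
  have hEA : {ω | a1 + ξ1 ω / ε > a2 + ξ2 ω / ε} = {ω | ξ1 ω > α + ξ2 ω} := by
    ext ω
    simp only [Set.mem_setOf_eq, hα]
    have key : ξ1 ω - (ε * (a2 - a1) + ξ2 ω) = ε * ((a1 + ξ1 ω / ε) - (a2 + ξ2 ω / ε)) := by
      field_simp; ring
    constructor
    · intro h
      have h2 := mul_pos hε (sub_pos.mpr h)
      linarith [key]
    · intro h
      have h2 : 0 < ε * ((a1 + ξ1 ω / ε) - (a2 + ξ2 ω / ε)) := by rw [← key]; linarith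
      nlinarith [h2, hε]
  have hEB : {ω | b1 + ξ1 ω / ε' > b2 + ξ2 ω / ε'} = {ω | ξ1 ω > β + ξ2 ω} := by
    ext ω
    simp only [Set.mem_setOf_eq, hβ]
    have key : ξ1 ω - (ε' * (b2 - b1) + ξ2 ω) = ε' * ((b1 + ξ1 ω / ε') - (b2 + ξ2 ω / ε')) := by
      field_simp; ring
    constructor
    · intro h
      have h2 := mul_pos hε' (sub_pos.mpr h)
      linarith [key]
    · intro h
      have h2 : 0 < ε' * ((b1 + ξ1 ω / ε') - (b2 + ξ2 ω / ε')) := by rw [← key]; linarith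
      nlinarith [h2, hε']
  rw [hEA, hEB, prob_eq_lintegral Pr ξ1 ξ2 hm1 hm2 hind ht1 α,
    prob_eq_lintegral Pr ξ1 ξ2 hm1 hm2 hind ht1 β]
  haveI : IsProbabilityMeasure (Pr.map ξ2) := Measure.isProbabilityMeasure_map hm2.aemeasurable
  have habs := abs_le.mp hK
  constructor
  · exact lintegral_tail_le (le_trans (abs_nonneg _) hK) (by linarith [habs.1])
  · -- goal: ∫ g_α ≥ ofReal(exp(-K)) * ∫ g_β, i.e. ∫ g_β ≤ ofReal(exp K) * ∫ g_α... 
    have h1 : (∫⁻ y, ENNReal.ofReal (Real.exp (-(max (β + y) 0))) ∂(Pr.map ξ2)) ≤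
        ENNReal.ofReal (Real.exp K) * ∫⁻ y, ENNReal.ofReal (Real.exp (-(max (α + y) 0))) ∂(Pr.map ξ2) :=
      lintegral_tail_le (le_trans (abs_nonneg _) hK) (by linarith [habs.2])
    have hK' : ENNReal.ofReal (Real.exp (-K)) * ENNReal.ofReal (Real.exp K) = 1 := by
      rw [← ENNReal.ofReal_mul (Real.exp_pos _).le, ← Real.exp_add]
      simp
    calc ENNReal.ofReal (Real.exp (-K)) * ∫⁻ y, ENNReal.ofReal (Real.exp (-(max (β + y) 0))) ∂(Pr.map ξ2)
        ≤ ENNReal.ofReal (Real.exp (-K)) * (ENNReal.ofReal (Real.exp K) *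
            ∫⁻ y, ENNReal.ofReal (Real.exp (-(max (α + y) 0))) ∂(Pr.map ξ2)) :=
          mul_le_mul_right h1 _
      _ = ∫⁻ y, ENNReal.ofReal (Real.exp (-(max (α + y) 0))) ∂(Pr.map ξ2) := by
          rw [← mul_assoc, hK', one_mul]
end
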